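/- If an element x of an abelian group satisfies n₀·(q^{k(n+1-k)} − 1)·x = 0 for all k with 1 ≤ k ≤ n, and n is odd, then n₀·(q−1)·x = 0. -/

import Mathlib

/-!
Both `n₀ (q ^ n - 1)` (from `k = 1`) and `n₀ (q ^ (2 (n - 1)) - 1)` (from `k = 2`) kill `x`, hence
so does their gcd `n₀ (q ^ gcd(n, 2 (n - 1)) - 1)`, and `gcd(n, 2 (n - 1)) = 1` for odd `n`.
-/

theorem mul_pow_gcd_sub_one_nsmul_eq_zero {A : Type*} [AddMonoid A] {x : A} {a q m k : ℕ}
    (hm : (a * (q ^ m - 1)) • x = 0) (hk : (a * (q ^ k - 1)) • x = 0) :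
    (a * (q ^ m.gcd k - 1)) • x = 0 := by
  rw [← Nat.pow_sub_one_gcd_pow_sub_one, ← Nat.gcd_mul_left]
  exact gcd_nsmul_eq_zero.mpr ⟨hm, hk⟩

theorem Odd.coprime_two_mul_sub_one {n : ℕ} (hn : Odd n) : n.Coprime (2 * (n - 1)) :=
  hn.coprime_two_right.mul_right <|
    (Nat.coprime_self_sub_right hn.pos).mpr (Nat.coprime_one_right n)

theorem stmt1_general {A : Type*} [AddCommGroup A] (x : A) (n₀ q n : ℕ)
    (hn : 1 ≤ n) (hodd : Odd n)
    (h : ∀ k, 1 ≤ k → k ≤ n → (n₀ * (q ^ (k * (n + 1 - k)) - 1)) • x = 0) :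
    (n₀ * (q - 1)) • x = 0 := by
  have h₁ : (n₀ * (q ^ n - 1)) • x = 0 := by
    simpa using h 1 le_rfl hn
  have h₂ : (n₀ * (q ^ (2 * (n - 1)) - 1)) • x = 0 := by
    rcases hn.eq_or_lt with rfl | hn
    · simp
    · simpa [show n + 1 - 2 = n - 1 by omega] using h 2 one_le_two hn
  simpa [hodd.coprime_two_mul_sub_one] using mul_pow_gcd_sub_one_nsmul_eq_zero h₁ h₂

theorem stmt1 {A : Type*} [AddCommGroup A] (x : A) (n₀ q n : ℕ)
    (hn₀ : 1 ≤ n₀) (hq : 2 ≤ q) (hn : 1 ≤ n) (hodd : Odd n)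
    (h : ∀ k, 1 ≤ k → k ≤ n → (n₀ * (q ^ (k * (n + 1 - k)) - 1)) • x = 0) :
    (n₀ * (q - 1)) • x = 0 :=
  stmt1_general x n₀ q n hn hodd h
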